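/- arXiv:2103.03932 — 4 statements merged into one kernel-verified Lean document; each statement's English description precedes it below -/
import Mathlib

section
/- Let f : ℕ → ℝ be defined by f(0) = 0 and f(w+1) = max over cutoff indices k ∈ {1,...,I} of [ Σ_{j=k}^{I} p_j·j + f(w)·Σ_{j=1}^{k-1} p_j ], where p_j ≥ 0, Σ_{j=1}^{I} p_j = 1, and p_I > 0. Then f is monotone nondecreasing: f(w) ≤ f(w+1) for all w. -/
open Finset

/-- The optimal bounded-horizon hold value `f(0)=0`,
`f(w+1) = max_{k ∈ {1,...,I}} [Σ_{j=k}^I p_j·j + f(w)·Σ_{j=1}^{k-1} p_j]`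
is monotone nondecreasing in the window size `w`. -/
theorem stmt_3 (I : ℕ) (hI : 1 ≤ I) (p : ℕ → ℝ) (hp : ∀ j, 0 ≤ p j)
    (hsum : ∑ j ∈ Icc 1 I, p j = 1) (hpI : 0 < p I)
    (f : ℕ → ℝ) (hf0 : f 0 = 0)
    (hfrec : ∀ w, f (w + 1) =
      (Icc 1 I).sup' (Finset.nonempty_Icc.mpr hI)
        (fun k => ∑ j ∈ Icc k I, p j * j + f w * ∑ j ∈ Icc 1 (k - 1), p j)) :
    Monotone f := by
  apply monotone_nat_of_le_succ
  intro w
  induction w with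
  | zero =>
    rw [hf0, hfrec]
    refine le_trans ?_ (Finset.le_sup' _ (Finset.mem_Icc.mpr ⟨le_refl 1, hI⟩))
    have : (0:ℝ) ≤ ∑ j ∈ Icc 1 I, p j * j :=
      Finset.sum_nonneg fun j _ => mul_nonneg (hp j) (Nat.cast_nonneg j)
    simpa [hf0] using this
  | succ n ih =>
    rw [hfrec, hfrec]
    apply Finset.sup'_le
    intro k hk
    refine le_trans ?_ (Finset.le_sup' _ hk)
    gcongr
    exact Finset.sum_nonneg fun j _ => hp j
end

section
/- Define the cutoff i*(w) as the least integer price i ∈ {1,...,I} such that i > f(w), where f(0) = 0 and f(w+1) = Σ_{j ≥ i*(w+1)'} p_j·j + f(w)·Σ_{j < i*(w+1)'} p_j is the hold value (with optimal cutoff at each stage), prices are 1,...,I with probabilities p_j > 0 summing to 1. Then i*(0) = 1, and i*(w) is monotone nondecreasing in w. -/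
/-!
The hold value `f` is obtained by iterating the Bellman operator
`x ↦ max_k (∑_{j ≥ k} p_j j + x ∑_{j < k} p_j)`, which is monotone in `x` because the weights
`∑_{j < k} p_j` are nonnegative. Since `f 0 = 0 ≤ f 1`, the iterates increase, and the least
price exceeding `f w` can only grow with `w`. At `w = 0` every price exceeds `f 0 = 0`.
-/

open Finset

theorem sup'_add_mul_le_sup'_add_mul {ι R : Type*} [Semiring R] [LinearOrder R]
    [IsOrderedRing R] {s : Finset ι} (hs : s.Nonempty) (a : ι → R) {b : ι → R}
    (hb : ∀ k ∈ s, 0 ≤ b k) {x y : R} (hxy : x ≤ y) :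
    s.sup' hs (fun k => a k + x * b k) ≤ s.sup' hs (fun k => a k + y * b k) :=
  sup'_mono_fun fun k hk => add_le_add_right (mul_le_mul_of_nonneg_right hxy (hb k hk)) _

section HoldValue

variable {I : ℕ} (hI : 1 ≤ I) {p : ℕ → ℝ} {f : ℕ → ℝ}
include hI

theorem holdValue_succ_nonneg (hp : ∀ j ∈ Icc 1 I, 0 ≤ p j)
    (hfrec : ∀ w, f (w + 1) = (Icc 1 I).sup' (nonempty_Icc.mpr hI)
      (fun k => ∑ j ∈ Icc k I, p j * j + f w * ∑ j ∈ Icc 1 (k - 1), p j)) (w : ℕ) :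
    0 ≤ f (w + 1) := by
  have hsell : 0 ≤ ∑ j ∈ Icc 1 I, p j * j :=
    sum_nonneg fun j hj => mul_nonneg (hp j hj) j.cast_nonneg
  -- the `k = 1` branch sells at every price
  calc 0 ≤ ∑ j ∈ Icc 1 I, p j * j + f w * ∑ j ∈ Icc 1 (1 - 1), p j := by simpa using hsell
    _ ≤ f (w + 1) := by
      rw [hfrec w]
      exact le_sup'_of_le _ (mem_Icc.mpr ⟨le_rfl, hI⟩) le_rfl

theorem holdValue_monotone (hp : ∀ j ∈ Icc 1 I, 0 ≤ p j) (hf0 : f 0 = 0)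
    (hfrec : ∀ w, f (w + 1) = (Icc 1 I).sup' (nonempty_Icc.mpr hI)
      (fun k => ∑ j ∈ Icc k I, p j * j + f w * ∑ j ∈ Icc 1 (k - 1), p j)) :
    Monotone f := by
  have hweights : ∀ k ∈ Icc 1 I, 0 ≤ ∑ j ∈ Icc 1 (k - 1), p j := fun k hk =>
    sum_nonneg fun j hj => hp j (Icc_subset_Icc_right ((k.sub_le 1).trans (mem_Icc.mp hk).2) hj)
  refine monotone_nat_of_le_succ fun w => ?_
  induction w with
  | zero => exact hf0 ▸ holdValue_succ_nonneg hI hp hfrec 0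
  | succ w ih =>
    rw [hfrec w, hfrec (w + 1)]
    exact sup'_add_mul_le_sup'_add_mul _ _ hweights ih

end HoldValue

def cutoffSet (I : ℕ) (x : ℝ) : Set ℕ := {i | 1 ≤ i ∧ i ≤ I ∧ x < (i : ℝ)}

theorem cutoffSet_antitone (I : ℕ) : Antitone (cutoffSet I) :=
  fun _ _ hxy _ ⟨h1, hI, hy⟩ => ⟨h1, hI, hxy.trans_lt hy⟩

theorem isLeast_cutoffSet_one {I : ℕ} (hI : 1 ≤ I) {x : ℝ} (hx : x < 1) :
    IsLeast (cutoffSet I x) 1 :=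
  ⟨⟨le_rfl, hI, by exact_mod_cast hx⟩, fun _ hi => hi.1⟩

theorem stmt_6_general (I : ℕ) (hI : 1 ≤ I) (p : ℕ → ℝ) (hp : ∀ j ∈ Icc 1 I, 0 < p j)
    (f : ℕ → ℝ) (hf0 : f 0 = 0)
    (hfrec : ∀ w, f (w + 1) =
      (Icc 1 I).sup' (Finset.nonempty_Icc.mpr hI)
        (fun k => ∑ j ∈ Icc k I, p j * j + f w * ∑ j ∈ Icc 1 (k - 1), p j))
    (istar : ℕ → ℕ)
    (histar : ∀ w, IsLeast {i : ℕ | 1 ≤ i ∧ i ≤ I ∧ f w < (i : ℝ)} (istar w)) :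
    istar 0 = 1 ∧ Monotone istar := by
  have hf : Monotone f := holdValue_monotone hI (fun j hj => (hp j hj).le) hf0 hfrec
  refine ⟨(histar 0).unique (isLeast_cutoffSet_one hI (by simp [hf0])), fun v w hvw => ?_⟩
  exact (histar w).mono (histar v) (cutoffSet_antitone I (hf hvw))

/-- With the optimally-updated hold value `f` and the cutoff `i*(w)` defined as the least
price `i ∈ {1,...,I}` with `i > f(w)`, we have `i*(0) = 1` and `i*` is monotone
nondecreasing in the window size `w`. -/
theorem stmt_6 (I : ℕ) (hI : 1 ≤ I) (p : ℕ → ℝ) (hp : ∀ j ∈ Icc 1 I, 0 < p j)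
    (hsum : ∑ j ∈ Icc 1 I, p j = 1)
    (f : ℕ → ℝ) (hf0 : f 0 = 0)
    (hfrec : ∀ w, f (w + 1) =
      (Icc 1 I).sup' (Finset.nonempty_Icc.mpr hI)
        (fun k => ∑ j ∈ Icc k I, p j * j + f w * ∑ j ∈ Icc 1 (k - 1), p j))
    (istar : ℕ → ℕ)
    (histar : ∀ w, IsLeast {i : ℕ | 1 ≤ i ∧ i ≤ I ∧ f w < (i : ℝ)} (istar w)) :
    istar 0 = 1 ∧ Monotone istar :=
  stmt_6_general I hI p hp f hf0 hfrec istar histar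
end

section
/- Let f : ℕ → ℝ with f(0) = 0 and f(w+1) = Σ_{j=k(w)}^{I} p_j·j + f(w)·Σ_{j<k(w)} p_j, where k(w) is the least integer price strictly exceeding f(w), and p_j > 0 sum to 1 with I ≥ 2. Then the mean price μ = Σ_j p_j·j satisfies f(w) ≥ μ for all w ≥ 1. -/
/-!
Already one step of the recursion gives the bound. By minimality of the cutoff `k(w)`, every
price `j < k(w)` satisfies `j ≤ f(w)`; so `f(w+1)` is the mean price `μ = Σ p_j j` with the
prices below the cutoff replaced by the larger value `f(w)`.
-/

open Finset

theorem sum_Icc_one_eq_sum_Icc_add_sum_Icc {M : Type*} [AddCommMonoid M] (g : ℕ → M)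
    {I k : ℕ} (hk : 1 ≤ k) (hkI : k ≤ I + 1) :
    ∑ j ∈ Icc 1 I, g j = ∑ j ∈ Icc 1 (k - 1), g j + ∑ j ∈ Icc k I, g j := by
  rw [← Ico_add_one_right_eq_Icc, ← Ico_add_one_right_eq_Icc, ← Ico_add_one_right_eq_Icc,
    Nat.sub_add_cancel hk, sum_Ico_consecutive _ hk hkI]

theorem sum_mul_le_sum_Icc_add_mul_sum {p : ℕ → ℝ} {I k : ℕ} {x : ℝ}
    (hp : ∀ j ∈ Icc 1 I, 0 ≤ p j) (hk : 1 ≤ k) (hkI : k ≤ I + 1)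
    (hx : ∀ j ∈ Icc 1 (k - 1), (j : ℝ) ≤ x) :
    ∑ j ∈ Icc 1 I, p j * j ≤ ∑ j ∈ Icc k I, p j * j + x * ∑ j ∈ Icc 1 (k - 1), p j := by
  have hbelow : ∑ j ∈ Icc 1 (k - 1), p j * j ≤ x * ∑ j ∈ Icc 1 (k - 1), p j := by
    rw [mul_sum]
    refine sum_le_sum fun j hj => ?_
    have hjI : j ∈ Icc 1 I := Icc_subset_Icc_right (by omega) hj
    rw [mul_comm x]
    exact mul_le_mul_of_nonneg_left (hx j hj) (hp j hjI)
  rw [sum_Icc_one_eq_sum_Icc_add_sum_Icc _ hk hkI]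
  linarith

theorem le_of_mem_Icc_of_isLeast {I k j : ℕ} {x : ℝ}
    (hk : IsLeast {i : ℕ | 1 ≤ i ∧ i ≤ I ∧ x < (i : ℝ)} k) (hj : j ∈ Icc 1 (k - 1)) :
    (j : ℝ) ≤ x := by
  rw [mem_Icc] at hj
  by_contra! hxj
  have hkI := hk.1.2.1
  have := hk.2 ⟨hj.1, by omega, hxj⟩
  omega

theorem stmt_11_general (I : ℕ) (p : ℕ → ℝ) (hp : ∀ j ∈ Icc 1 I, 0 < p j)
    (f : ℕ → ℝ) (k : ℕ → ℕ)
    (hk : ∀ w, IsLeast {i : ℕ | 1 ≤ i ∧ i ≤ I ∧ f w < (i : ℝ)} (k w))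
    (hfrec : ∀ w, f (w + 1) =
      ∑ j ∈ Icc (k w) I, p j * j + f w * ∑ j ∈ Icc 1 (k w - 1), p j) :
    ∀ w, 1 ≤ w → ∑ j ∈ Icc 1 I, p j * j ≤ f w := by
  intro w hw
  obtain ⟨v, rfl⟩ : ∃ v, w = v + 1 := ⟨w - 1, by omega⟩
  obtain ⟨⟨hk1, hkI, -⟩, -⟩ := hk v
  rw [hfrec v]
  exact sum_mul_le_sum_Icc_add_mul_sum (fun j hj => (hp j hj).le) hk1 (by omega)
    fun j hj => le_of_mem_Icc_of_isLeast (hk v) hj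

/-- With the myopic-optimal cutoff `k(w)` = least integer price strictly exceeding `f(w)`,
the hold value with window at least one day is at least the unconditional mean price:
`f(w) ≥ μ = Σ_{j=1}^I p_j·j` for all `w ≥ 1`. -/
theorem stmt_11 (I : ℕ) (hI : 2 ≤ I) (p : ℕ → ℝ) (hp : ∀ j ∈ Icc 1 I, 0 < p j)
    (hsum : ∑ j ∈ Icc 1 I, p j = 1)
    (f : ℕ → ℝ) (hf0 : f 0 = 0) (k : ℕ → ℕ)
    (hk : ∀ w, IsLeast {i : ℕ | 1 ≤ i ∧ i ≤ I ∧ f w < (i : ℝ)} (k w))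
    (hfrec : ∀ w, f (w + 1) =
      ∑ j ∈ Icc (k w) I, p j * j + f w * ∑ j ∈ Icc 1 (k w - 1), p j) :
    ∀ w, 1 ≤ w → ∑ j ∈ Icc 1 I, p j * j ≤ f w :=
  stmt_11_general I p hp f k hk hfrec
end

section
/- In the EUT model with cutoff prices defined by: i*(D) = 1 and, for d < D, i*(d) = least integer price i such that i > Σ_{j ≥ i*(d+1)} p_j·j + f_h(d+1)·Σ_{j < i*(d+1)} p_j, where f_h is defined by the recursion f_h(D) = 0, f_h(D-1) = Σ_{j ≥ i*(D)} p_j·j, f_h(d) = Σ_{j ≥ i*(d+1)} p_j·j + f_h(d+1)·Σ_{j < i*(d+1)} p_j — the cutoff i*(d) is nonincreasing in d: i*(d) ≥ i*(d+1) for all d < D. -/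
open Finset

lemma stmt_16_maxform (I : ℕ) (p : ℕ → ℝ) (v : ℝ) (i0 : ℕ)
    (h : IsLeast {i : ℕ | 1 ≤ i ∧ i ≤ I ∧ v < (i : ℝ)} i0) :
    ∑ j ∈ Icc i0 I, p j * j + v * ∑ j ∈ Icc 1 (i0 - 1), p j
      = ∑ j ∈ Icc 1 I, p j * max (j : ℝ) v := by
  obtain ⟨⟨h1, hI0, hv⟩, hlb⟩ := h
  have hsplit : Finset.Icc 1 I = Finset.Icc 1 (i0 - 1) ∪ Finset.Icc i0 I := by
    ext j; simp only [Finset.mem_Icc, Finset.mem_union]; omega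
  have hdisj : Disjoint (Finset.Icc 1 (i0 - 1)) (Finset.Icc i0 I) := by
    simp only [Finset.disjoint_left, Finset.mem_Icc]; omega
  rw [hsplit, Finset.sum_union hdisj]
  have hA : ∑ j ∈ Icc 1 (i0 - 1), p j * max (j : ℝ) v
      = v * ∑ j ∈ Icc 1 (i0 - 1), p j := by
    rw [Finset.mul_sum]
    apply Finset.sum_congr rfl
    intro j hj
    rw [Finset.mem_Icc] at hj
    have hjle : (j : ℝ) ≤ v := by
      by_contra hc
      push_neg at hc
      have : i0 ≤ j := hlb ⟨hj.1, by omega, hc⟩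
      omega
    rw [max_eq_right hjle, mul_comm]
  have hB : ∑ j ∈ Icc i0 I, p j * max (j : ℝ) v = ∑ j ∈ Icc i0 I, p j * j := by
    apply Finset.sum_congr rfl
    intro j hj
    rw [Finset.mem_Icc] at hj
    have : v < (j : ℝ) := lt_of_lt_of_le hv (by exact_mod_cast hj.1)
    rw [max_eq_left this.le]
  rw [hA, hB, add_comm]

/-- In the EUT model over days `1,...,D` with i.i.d. prices `1,...,I` of probabilities
`p_j > 0`, with `i*(D) = 1`, hold values `f_h(D) = 0`,
`f_h(d) = Σ_{j ≥ i*(d+1)} p_j·j + f_h(d+1)·Σ_{j < i*(d+1)} p_j` for `d < D`, and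
`i*(d)` the least price `i ∈ {1,...,I}` with `i > f_h(d)` for `1 ≤ d < D`, the cutoff
price is nonincreasing in the day: `i*(d) ≥ i*(d+1)` for all `1 ≤ d < D`. -/
theorem stmt_16 (I D : ℕ) (hI : 1 ≤ I) (hD : 1 ≤ D)
    (p : ℕ → ℝ) (hp : ∀ j ∈ Icc 1 I, 0 < p j) (hsum : ∑ j ∈ Icc 1 I, p j = 1)
    (istar : ℕ → ℕ) (fh : ℕ → ℝ)
    (histarD : istar D = 1) (hfhD : fh D = 0)
    (hfrec : ∀ d < D, fh d =
      ∑ j ∈ Icc (istar (d + 1)) I, p j * j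
        + fh (d + 1) * ∑ j ∈ Icc 1 (istar (d + 1) - 1), p j)
    (histar : ∀ d, 1 ≤ d → d < D →
      IsLeast {i : ℕ | 1 ≤ i ∧ i ≤ I ∧ fh d < (i : ℝ)} (istar d)) :
    ∀ d, 1 ≤ d → d < D → istar (d + 1) ≤ istar d := by
  -- leastness also holds at day D
  have hleast : ∀ e, e ≤ D → 1 ≤ e →
      IsLeast {i : ℕ | 1 ≤ i ∧ i ≤ I ∧ fh e < (i : ℝ)} (istar e) := by
    intro e heD he1
    rcases eq_or_lt_of_le heD with heq | hlt
    · subst heq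
      rw [histarD]
      exact ⟨⟨le_refl 1, hI, by rw [hfhD]; norm_num⟩, fun i hi => hi.1⟩
    · exact histar e he1 hlt
  -- cutoff form of the recursion
  have hmaxform : ∀ d, d < D → 1 ≤ d + 1 →
      fh d = ∑ j ∈ Icc 1 I, p j * max (j : ℝ) (fh (d + 1)) := by
    intro d hd _
    rw [hfrec d hd]
    exact stmt_16_maxform I p (fh (d + 1)) (istar (d + 1))
      (hleast (d + 1) (by omega) (by omega))
  -- fh is nonincreasing
  have key : ∀ k d, d + k = D → 0 < k → fh (d + 1) ≤ fh d := by
    intro k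
    induction k with
    | zero => intro d _ h; omega
    | succ m ih =>
      intro d hd _
      have hdD : d < D := by omega
      have h1 := hmaxform d hdD (by omega)
      by_cases hcase : d + 1 = D
      · rw [hcase, hfhD, h1, hcase, hfhD]
        apply Finset.sum_nonneg
        intro j hj
        exact mul_nonneg (hp j hj).le (le_max_of_le_left (Nat.cast_nonneg j))
      · have hd1D : d + 1 < D := by omega
        have ih' : fh (d + 1 + 1) ≤ fh (d + 1) := ih (d + 1) (by omega) (by omega)
        have h2 := hmaxform (d + 1) hd1D (by omega)
        rw [h2, h1]
        apply Finset.sum_le_sum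
        intro j hj
        exact mul_le_mul_of_nonneg_left (max_le_max le_rfl ih') (hp j hj).le
  intro d h1 hdD
  have hmem := (histar d h1 hdD).1
  by_cases h : d + 1 = D
  · rw [h, histarD]; exact hmem.1
  · have h2 : d + 1 < D := by omega
    have hfle : fh (d + 1) ≤ fh d := key (D - d) d (by omega) (by omega)
    exact (histar (d + 1) (by omega) h2).2
      ⟨hmem.1, hmem.2.1, lt_of_le_of_lt hfle hmem.2.2⟩
end
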